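/- arXiv:2006.02854 — 2 statements merged into one kernel-verified Lean document; each statement's English description precedes it below -/
import Mathlib

section
/- Stroppa–Yvon numerical proportions are subsumed: for integers a, b, c, d, if there exist integers a₁, a₂, d₁, d₂ with a = a₁ + a₂, b = a₁ + d₂, c = d₁ + a₂, and d = d₁ + d₂, then the analogical proportion a : b :: c : d holds in (ℤ, +, ℤ), characteristically justified by z + a₂ → z + d₂ with witnesses a₁ → d₁. -/
/- Analogical proportions (Antić): single-variable terms over a language of algebras. -/

/-- A term over a language with function symbols `F` of arities `ar`, in the single variable `z`.
Constant symbols are function symbols of arity 0. -/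
inductive Term (F : Type*) (ar : F → ℕ) : Type _ where
  | var : Term F ar
  | app : (f : F) → (Fin (ar f) → Term F ar) → Term F ar

/-- An algebra for the language `(F, ar)` with universe `A`. -/
structure Alg (F : Type*) (ar : F → ℕ) (A : Type*) where
  interp : (f : F) → (Fin (ar f) → A) → A

variable {F : Type*} {ar : F → ℕ} {A B : Type*}

/-- Evaluation of a term at `z := x`. -/
def Term.eval (𝔸 : Alg F ar A) (x : A) : Term F ar → A
  | .var => x
  | .app f ts => 𝔸.interp f fun i => (ts i).eval 𝔸 x

/-- The set of justifications `s → t` of a pair `(a, b)` in the algebra `𝔸`: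
pairs of terms such that `a = s(e)` and `b = t(e)` for some witness `e`. -/
def Jus (𝔸 : Alg F ar A) (a b : A) : Set (Term F ar × Term F ar) :=
  {p | ∃ e : A, p.1.eval 𝔸 e = a ∧ p.2.eval 𝔸 e = b}

/-- Justifications of `a : b :: c : d` in `(𝔸, 𝔹)`. -/
def JusP (𝔸 : Alg F ar A) (𝔹 : Alg F ar B) (a b : A) (c d : B) :
    Set (Term F ar × Term F ar) :=
  Jus 𝔸 a b ∩ Jus 𝔹 c d

/-- `(𝔸, 𝔹) ⊨ a : b :: c : d`: the set of justifications is subset-maximal w.r.t. `d`. -/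
def Proportion (𝔸 : Alg F ar A) (𝔹 : Alg F ar B) (a b : A) (c d : B) : Prop :=
  ∀ d' : B, JusP 𝔸 𝔹 a b c d ⊆ JusP 𝔸 𝔹 a b c d' →
    JusP 𝔸 𝔹 a b c d' ⊆ JusP 𝔸 𝔹 a b c d

/-- `j` is a characteristic justification of `a : b :: c : d` in `(𝔸, 𝔹)`. -/
def CharJus (𝔸 : Alg F ar A) (𝔹 : Alg F ar B) (a b : A) (c d : B)
    (j : Term F ar × Term F ar) : Prop :=
  j ∈ JusP 𝔸 𝔹 a b c d ↔ Proportion 𝔸 𝔹 a b c d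

/-- The language of `(ℤ, +, ℤ)`: addition and a constant symbol for every integer. -/
inductive AddSym : Type | plus | const : ℤ → AddSym
def addAr : AddSym → ℕ | .plus => 2 | .const _ => 0

/-- The algebra `(ℤ, +, ℤ)`. -/
def ZAdd : Alg AddSym addAr ℤ :=
  ⟨fun f => match f with
    | .plus => fun v => v ⟨0, Nat.zero_lt_two⟩ + v ⟨1, Nat.one_lt_two⟩
    | .const k => fun _ => k⟩

/-- The constant term `k`. -/
def constT (k : ℤ) : Term AddSym addAr := Term.app (.const k) (fun i => i.elim0)
/-- The sum `s + t` as a term. -/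
def plusT (s t : Term AddSym addAr) : Term AddSym addAr :=
  Term.app .plus (![s, t] : Fin 2 → _)

/- A justification `s → t` of `a : b :: c : d` with `s` injective on `𝔹` pins down `d`: a
justification of `c : d'` arises from the same witness `e` (the unique one with `s(e) = c`),
so `d' = t(e) = d`. In `(ℤ, +, ℤ)` the source term `z + a₂` is injective, and `z + a₂ → z + d₂`
justifies `a : b :: c : d` through the witnesses `a₁ → d₁`. -/

section

variable {𝔸 : Alg F ar A} {𝔹 : Alg F ar B} {a b : A} {c d : B} {j : Term F ar × Term F ar}

theorem eq_of_mem_jusP_of_injective {d' : B} (hinj : Function.Injective (j.1.eval 𝔹))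
    (hj : j ∈ JusP 𝔸 𝔹 a b c d) (hj' : j ∈ JusP 𝔸 𝔹 a b c d') : d' = d := by
  obtain ⟨e, hec, hed⟩ := hj.2
  obtain ⟨e', he'c, he'd'⟩ := hj'.2
  obtain rfl : e' = e := hinj (he'c.trans hec.symm)
  exact he'd'.symm.trans hed

theorem proportion_of_mem_jusP_of_injective (hinj : Function.Injective (j.1.eval 𝔹))
    (hj : j ∈ JusP 𝔸 𝔹 a b c d) : Proportion 𝔸 𝔹 a b c d := by
  intro d' hsub
  rw [eq_of_mem_jusP_of_injective hinj hj (hsub hj)]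

theorem charJus_of_mem_jusP_of_injective (hinj : Function.Injective (j.1.eval 𝔹))
    (hj : j ∈ JusP 𝔸 𝔹 a b c d) : CharJus 𝔸 𝔹 a b c d j :=
  ⟨proportion_of_mem_jusP_of_injective hinj, fun _ => hj⟩

end

theorem eval_plusT_var_constT (k x : ℤ) : (plusT Term.var (constT k)).eval ZAdd x = x + k :=
  rfl

theorem injective_eval_plusT_var_constT (k : ℤ) :
    Function.Injective ((plusT Term.var (constT k)).eval ZAdd) := by
  simpa only [eval_plusT_var_constT] using add_left_injective k

/-- Stroppa–Yvon numerical proportions are subsumed: if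
`a = a₁ + a₂`, `b = a₁ + d₂`, `c = d₁ + a₂`, `d = d₁ + d₂`, then `a : b :: c : d`
holds in `(ℤ, +, ℤ)`, characteristically justified by `z + a₂ → z + d₂`
with witnesses `a₁ → d₁`. -/
theorem SY_subsumed (a b c d a1 a2 d1 d2 : ℤ)
    (ha : a = a1 + a2) (hb : b = a1 + d2) (hc : c = d1 + a2) (hd : d = d1 + d2) :
    Proportion ZAdd ZAdd a b c d ∧
      CharJus ZAdd ZAdd a b c d (plusT Term.var (constT a2), plusT Term.var (constT d2)) ∧
      ((plusT Term.var (constT a2)).eval ZAdd a1 = a ∧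
        (plusT Term.var (constT d2)).eval ZAdd a1 = b ∧
        (plusT Term.var (constT a2)).eval ZAdd d1 = c ∧
        (plusT Term.var (constT d2)).eval ZAdd d1 = d) := by
  subst ha hb hc hd
  have hwitness :
      (plusT Term.var (constT a2), plusT Term.var (constT d2)) ∈
        JusP ZAdd ZAdd (a1 + a2) (a1 + d2) (d1 + a2) (d1 + d2) :=
    ⟨⟨a1, rfl, rfl⟩, ⟨d1, rfl, rfl⟩⟩
  have hinj := injective_eval_plusT_var_constT a2
  exact ⟨proportion_of_mem_jusP_of_injective hinj hwitness,
    charJus_of_mem_jusP_of_injective hinj hwitness, rfl, rfl, rfl, rfl⟩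
end

section
/- The converse of the Stroppa–Yvon subsumption fails: in (ℤ, +, ℤ), the proportion 0 : 0 :: 1 : 2 holds (characteristically justified by z → z + z), but there exist no integers a₁, a₂, d₁, d₂ with 0 = a₁ + a₂, 0 = a₁ + d₂, 1 = d₁ + a₂, and 2 = d₁ + d₂. -/
variable {F : Type*} {ar : F → ℕ} {A B : Type*}

theorem Term.eval_var (𝔸 : Alg F ar A) (x : A) : (Term.var : Term F ar).eval 𝔸 x = x := rfl

@[simp]
theorem eval_plusT (s t : Term AddSym addAr) (x : ℤ) :
    (plusT s t).eval ZAdd x = s.eval ZAdd x + t.eval ZAdd x := rfl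

theorem mem_Jus_var_double_iff {a b : ℤ} :
    (Term.var, plusT Term.var Term.var) ∈ Jus ZAdd a b ↔ b = a + a := by
  simp only [Jus, Set.mem_ofPred_eq, eval_plusT, Term.eval_var]
  constructor
  · rintro ⟨e, rfl, rfl⟩
    rfl
  · rintro rfl
    exact ⟨a, rfl, rfl⟩

theorem proportion_of_mem_JusP {𝔸 : Alg F ar A} {𝔹 : Alg F ar B} {a b : A} {c d : B}
    {j : Term F ar × Term F ar} (hj : j ∈ JusP 𝔸 𝔹 a b c d)
    (hunique : ∀ d', j ∈ Jus 𝔹 c d' → d' = d) : Proportion 𝔸 𝔹 a b c d := by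
  intro d' hsub
  obtain rfl : d' = d := hunique d' (hsub hj).2
  exact subset_rfl

theorem var_double_mem_JusP : (Term.var, plusT Term.var Term.var) ∈ JusP ZAdd ZAdd 0 0 1 2 :=
  ⟨mem_Jus_var_double_iff.2 rfl, mem_Jus_var_double_iff.2 rfl⟩

theorem proportion_zero_zero_one_two : Proportion ZAdd ZAdd 0 0 1 2 :=
  proportion_of_mem_JusP var_double_mem_JusP fun _ h => mem_Jus_var_double_iff.1 h

/-- the converse of the Stroppa–Yvon subsumption fails: in
`(ℤ, +, ℤ)` the proportion `0 : 0 :: 1 : 2` holds (characteristically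
justified by `z → z + z`), but there is no Stroppa–Yvon decomposition. -/
theorem SY_converse_fails :
    Proportion ZAdd ZAdd 0 0 1 2 ∧
      CharJus ZAdd ZAdd 0 0 1 2 (Term.var, plusT Term.var Term.var) ∧
      ¬ ∃ a1 a2 d1 d2 : ℤ,
          (0 : ℤ) = a1 + a2 ∧ (0 : ℤ) = a1 + d2 ∧
          (1 : ℤ) = d1 + a2 ∧ (2 : ℤ) = d1 + d2 := by
  refine ⟨proportion_zero_zero_one_two,
    iff_of_true var_double_mem_JusP proportion_zero_zero_one_two, ?_⟩
  -- Both pairs of equations sum to `a1 + a2 + d1 + d2`, once giving 2 and once 1.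
  rintro ⟨a1, a2, d1, d2, h1, h2, h3, h4⟩
  omega
end
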